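/- If α ≤ (1 + λ_n(Wᵗ))/L and x_0 = 0, then for all k ≥ 1 and all i the DGDᵗ iterates satisfy ‖∇f_i(x_{i,k}) − ∇f_i(x̄_k)‖ ≤ αDL_i/(1 − βᵗ) and ‖g_k − ḡ_k‖ ≤ αDL/(1 − βᵗ), where x̄_k = (1/n)Σ_i x_{i,k}, g_k = (1/n)Σ_i ∇f_i(x_{i,k}), ḡ_k = (1/n)Σ_i ∇f_i(x̄_k), and D = √(2L Σ_i (f_i(0) − f_i*)). -/

import Mathlib

open Finset Filter

noncomputable section

/-- A block `ℝ^p` with the Euclidean norm. -/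
abbrev Vec (p : ℕ) := EuclideanSpace ℝ (Fin p)

/-- The concatenated space `ℝ^{np}` (n blocks of size p) with the Euclidean norm. -/
abbrev CVec (n p : ℕ) := PiLp 2 (fun _ : Fin n => Vec p)

/-- Action of the Kronecker product `W ⊗ I_p` on a concatenated vector of `ℝ^{np}`. -/
def kron {n p : ℕ} (W : Matrix (Fin n) (Fin n) ℝ) (x : CVec n p) : CVec n p :=
  WithLp.toLp 2 (fun i => ∑ j, W i j • x j)

/-- Concatenated gradient `∇f(x) = (∇f₁(x₁); …; ∇fₙ(xₙ))`. -/
def gradConcat {n p : ℕ} (f : Fin n → Vec p → ℝ) (x : CVec n p) : CVec n p :=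
  WithLp.toLp 2 (fun i => gradient (f i) (x i))

/-!
With `Φ(x) = Σᵢ fᵢ(xᵢ)`, the DGDᵗ step is `x ↦ x - ∇V(x)` for the Lyapunov function
`V(x) = ½⟨x, (I - Zᵗ)x⟩ + αΦ(x)`, whose gradient is `(1 - λₙ(Wᵗ) + αL)`-Lipschitz. The stepsize
condition bounds this constant by `2`, so `V` does not increase along the iterates; started at `0`
this gives `Φ(x_k) ≤ Φ(0)`, hence `‖∇f(x_k)‖ ≤ D` by `‖∇fᵢ(z)‖² ≤ 2Lᵢ(fᵢ(z) - fᵢ*)`.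
The consensus error `e_k = x_k - 1 ⊗ x̄_k` obeys `e_{k+1} = Zᵗe_k - α(I - J)∇f(x_k)`, and `Zᵗ`
contracts vectors with zero block sum by `βᵗ`: it acts as `Wᵗ` on each coordinate slice, and `1`
spans the eigenspace of `W` for the eigenvalue `1`. Hence `‖e_k‖ ≤ αD/(1 - βᵗ)`, and the Lipschitz
gradients turn this into both bounds.
-/

open scoped RealInnerProductSpace NNReal

section Spectral

variable {ι E : Type*} [Fintype ι] [NormedAddCommGroup E] [InnerProductSpace ℝ E]
  {T : E →ₗ[ℝ] E} {b : OrthonormalBasis ι ℝ E} {μ : ι → ℝ}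

lemma inner_apply_eq_mul_of_isSymmetric (hT : T.IsSymmetric) (hb : ∀ j, T (b j) = μ j • b j)
    (j : ι) (v : E) : ⟪b j, T v⟫ = μ j * ⟪b j, v⟫ := by
  rw [← hT, hb, real_inner_smul_left]

lemma mul_norm_sq_le_inner_apply_self (hT : T.IsSymmetric) (hb : ∀ j, T (b j) = μ j • b j)
    {lam : ℝ} (hlam : ∀ j, lam ≤ μ j) (v : E) : lam * ‖v‖ ^ 2 ≤ ⟪v, T v⟫ := by
  rw [← b.sum_sq_inner_right, ← b.sum_inner_mul_inner, mul_sum]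
  refine sum_le_sum fun j _ => ?_
  rw [inner_apply_eq_mul_of_isSymmetric hT hb, real_inner_comm]
  nlinarith [hlam j, sq_nonneg ⟪b j, v⟫]

lemma norm_apply_le_of_inner_ne_zero (hT : T.IsSymmetric) (hb : ∀ j, T (b j) = μ j • b j)
    {c : ℝ} (hc : 0 ≤ c) {v : E} (hv : ∀ j, ⟪b j, v⟫ ≠ 0 → |μ j| ≤ c) : ‖T v‖ ≤ c * ‖v‖ := by
  refine le_of_sq_le_sq ?_ (by positivity)
  rw [mul_pow, ← b.sum_sq_inner_right, ← b.sum_sq_inner_right, mul_sum]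
  refine sum_le_sum fun j _ => ?_
  rw [inner_apply_eq_mul_of_isSymmetric hT hb, mul_pow]
  by_cases hj : ⟪b j, v⟫ = 0
  · simp [hj]
  · have := sq_le_sq' (abs_le.mp (hv j hj)).1 (abs_le.mp (hv j hj)).2
    exact mul_le_mul_of_nonneg_right this (sq_nonneg _)

lemma inner_eq_zero_of_eigenvalue_eq_one (hT : T.IsSymmetric) (hb : ∀ j, T (b j) = μ j • b j)
    (hone : ∃! j, μ j = 1) {u : E} (hu : T u = u) (hu0 : u ≠ 0) {z : E} (hz : ⟪u, z⟫ = 0)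
    {j : ι} (hj : μ j = 1) : ⟪b j, z⟫ = 0 := by
  have hperp : ∀ i ≠ j, ⟪u, b i⟫ = 0 := fun i hi => by
    have h := inner_apply_eq_mul_of_isSymmetric hT hb i u
    rw [hu] at h
    have hμ : μ i ≠ 1 := fun h' => hi (hone.unique h' hj)
    rw [real_inner_comm]
    have h1 : (μ i - 1) * ⟪b i, u⟫ = 0 := by linarith
    exact (mul_eq_zero.mp h1).resolve_left (sub_ne_zero.mpr hμ)
  have hexpand : ∀ w, ⟪u, w⟫ = ⟪u, b j⟫ * ⟪b j, w⟫ := fun w => by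
    rw [← b.sum_inner_mul_inner]
    exact sum_eq_single j (fun i _ hi => by rw [hperp i hi, zero_mul]) (by simp)
  have huj : ⟪u, b j⟫ ≠ 0 := fun h => hu0 <| by
    simpa [h] using hexpand u
  exact (mul_eq_zero.mp ((hexpand z).symm.trans hz)).resolve_left huj

end Spectral

namespace Matrix.IsHermitian

variable {ι : Type*} [Fintype ι] [DecidableEq ι] {A : Matrix ι ι ℝ} (hA : A.IsHermitian)

lemma toEuclideanLin_eigenvectorBasis (j : ι) :
    toEuclideanLin A (hA.eigenvectorBasis j) = hA.eigenvalues j • hA.eigenvectorBasis j :=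
  WithLp.ofLp_injective 2 (by simpa [toLpLin_apply] using hA.mulVec_eigenvectorBasis j)

lemma mul_norm_sq_le_inner_toEuclideanLin {lam : ℝ} (hlam : ∀ j, lam ≤ hA.eigenvalues j)
    (v : EuclideanSpace ℝ ι) : lam * ‖v‖ ^ 2 ≤ ⟪v, toEuclideanLin A v⟫ :=
  mul_norm_sq_le_inner_apply_self (isSymmetric_toEuclideanLin_iff.mpr hA)
    hA.toEuclideanLin_eigenvectorBasis hlam v

lemma norm_toEuclideanLin_le {c : ℝ} (hc : 0 ≤ c) (h : ∀ j, |hA.eigenvalues j| ≤ c)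
    (v : EuclideanSpace ℝ ι) : ‖toEuclideanLin A v‖ ≤ c * ‖v‖ :=
  norm_apply_le_of_inner_ne_zero (isSymmetric_toEuclideanLin_iff.mpr hA)
    hA.toEuclideanLin_eigenvectorBasis hc fun j _ => h j

lemma norm_toEuclideanLin_le_of_sum_eq_zero (hrow : ∀ i, ∑ j, A i j = 1)
    (hone : ∃! j, hA.eigenvalues j = 1) {β : ℝ} (hβ : 0 ≤ β)
    (hβA : ∀ j, hA.eigenvalues j ≠ 1 → |hA.eigenvalues j| ≤ β) {v : EuclideanSpace ℝ ι}
    (hv : ∑ i, v i = 0) : ‖toEuclideanLin A v‖ ≤ β * ‖v‖ := by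
  set ones : EuclideanSpace ℝ ι := WithLp.toLp 2 1
  have hones : toEuclideanLin A ones = ones := by
    ext i
    simp [ones, toLpLin_apply, mulVec, dotProduct, hrow i]
  have hones0 : ones ≠ 0 := fun h => by
    obtain ⟨j, -⟩ := hone
    simpa [ones] using congr($h j)
  have hv1 : ⟪ones, v⟫ = 0 := by simpa [ones, PiLp.inner_apply] using hv
  refine norm_apply_le_of_inner_ne_zero (isSymmetric_toEuclideanLin_iff.mpr hA)
    hA.toEuclideanLin_eigenvectorBasis hβ fun j hj => hβA j fun h1 => hj ?_
  exact inner_eq_zero_of_eigenvalue_eq_one (isSymmetric_toEuclideanLin_iff.mpr hA)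
    hA.toEuclideanLin_eigenvectorBasis hone hones hones0 hv1 h1

end Matrix.IsHermitian

section Smooth

variable {E : Type*} [NormedAddCommGroup E] [InnerProductSpace ℝ E] [CompleteSpace E]
  {f : E → ℝ} {K : ℝ≥0}

theorem le_add_inner_gradient_add_of_lipschitzWith (hf : Differentiable ℝ f)
    (hK : LipschitzWith K (gradient f)) (x d : E) :
    f (x + d) ≤ f x + ⟪gradient f x, d⟫ + K / 2 * ‖d‖ ^ 2 := by
  have hderiv (s : ℝ) :
      HasDerivAt (fun s : ℝ => f (x + s • d)) ⟪gradient f (x + s • d), d⟫ s := by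
    have hline : HasDerivAt (fun s : ℝ => x + s • d) d s := by
      simpa using ((hasDerivAt_id s).smul_const d).const_add x
    rw [inner_gradient_left]
    exact (hf _).hasFDerivAt.comp_hasDerivAt s hline
  have hB (s : ℝ) : HasDerivAt (fun s : ℝ => f x + s * ⟪gradient f x, d⟫ + K / 2 * s ^ 2 * ‖d‖ ^ 2)
      (⟪gradient f x, d⟫ + K * s * ‖d‖ ^ 2) s := by
    refine ((((hasDerivAt_id' s).mul_const ⟪gradient f x, d⟫).const_add (f x)).add
      (((hasDerivAt_pow 2 s).const_mul ((K : ℝ) / 2)).mul_const (‖d‖ ^ 2))).congr_deriv ?_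
    ring
  have hbound : ∀ s ∈ Set.Ico (0 : ℝ) 1,
      ⟪gradient f (x + s • d), d⟫ ≤ ⟪gradient f x, d⟫ + K * s * ‖d‖ ^ 2 := fun s hs => by
    have hlip : ‖gradient f (x + s • d) - gradient f x‖ ≤ K * (s * ‖d‖) := by
      simpa [dist_eq_norm, norm_smul, abs_of_nonneg hs.1] using hK.dist_le_mul (x + s • d) x
    have := (real_inner_le_norm _ d).trans (mul_le_mul_of_nonneg_right hlip (norm_nonneg d))
    rw [inner_sub_left] at this
    nlinarith
  have := image_le_of_deriv_right_le_deriv_boundary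
    (fun s _ => (hderiv s).continuousAt.continuousWithinAt)
    (fun s _ => (hderiv s).hasDerivWithinAt) (by simp)
    (fun s _ => (hB s).continuousAt.continuousWithinAt) (fun s _ => (hB s).hasDerivWithinAt)
    hbound (Set.right_mem_Icc.mpr zero_le_one)
  simpa using this

theorem sq_norm_gradient_le_of_forall_le (hf : Differentiable ℝ f)
    (hK : LipschitzWith K (gradient f)) (hK0 : 0 < K) {xm : E} (hxm : ∀ z, f xm ≤ f z) (z : E) :
    ‖gradient f z‖ ^ 2 ≤ 2 * K * (f z - f xm) := by
  have h := le_add_inner_gradient_add_of_lipschitzWith hf hK z (-((K : ℝ)⁻¹ • gradient f z))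
  rw [inner_neg_right, real_inner_smul_right, real_inner_self_eq_norm_sq, norm_neg, norm_smul,
    Real.norm_of_nonneg (by positivity)] at h
  have hK0' : (0 : ℝ) < K := hK0
  have key : f xm ≤ f z - ‖gradient f z‖ ^ 2 / (2 * K) := by
    refine (hxm _).trans (h.trans_eq ?_)
    field_simp
    ring
  rw [le_sub_iff_add_le, ← le_sub_iff_add_le', div_le_iff₀ (by positivity)] at key
  linarith

end Smooth

section Lyapunov

variable {E : Type*} [NormedAddCommGroup E] [InnerProductSpace ℝ E]

def dgdLyapunov (M : E →ₗ[ℝ] E) (F : E → ℝ) (α : ℝ) (x : E) : ℝ :=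
  ⟪x, x - M x⟫ / 2 + α * F x

theorem dgdLyapunov_step_le {M : E →ₗ[ℝ] E} (hM : M.IsSymmetric) {lam : ℝ}
    (hlam : ∀ v, lam * ‖v‖ ^ 2 ≤ ⟪v, M v⟫) {F : E → ℝ} {G : E → E} {K : ℝ}
    (hF : ∀ x d, F (x + d) ≤ F x + ⟪G x, d⟫ + K / 2 * ‖d‖ ^ 2) {α : ℝ} (hα : 0 ≤ α)
    (hαK : α * K ≤ 1 + lam) (x : E) :
    dgdLyapunov M F α (M x - α • G x) ≤ dgdLyapunov M F α x := by
  -- `u = ∇V(x)` for `V = dgdLyapunov M F α`, and the step is `x - u`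
  set u := x - M x + α • G x with hu_def
  have hstep : M x - α • G x = x + -u := by rw [hu_def]; abel
  have hquad : ⟪x + -u, x + -u - M (x + -u)⟫
      = ⟪x, x - M x⟫ - 2 * ⟪u, x - M x⟫ + (‖u‖ ^ 2 - ⟪u, M u⟫) := by
    simp only [map_add, map_neg, inner_add_left, inner_add_right, inner_sub_right, inner_neg_left,
      inner_neg_right, real_inner_self_eq_norm_sq]
    rw [← hM x u, real_inner_comm u (M x), real_inner_comm u x]
    ring
  have hnorm_u : ‖u‖ ^ 2 = ⟪u, x - M x⟫ + α * ⟪u, G x⟫ := by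
    rw [← real_inner_self_eq_norm_sq]
    nth_rw 2 [hu_def]
    rw [inner_add_right, real_inner_smul_right]
  have hdesc := hF x (-u)
  rw [inner_neg_right, real_inner_comm, norm_neg] at hdesc
  have hlow := hlam u
  have hgap : 0 ≤ (1 + lam - α * K) * ‖u‖ ^ 2 := mul_nonneg (by linarith) (sq_nonneg _)
  unfold dgdLyapunov
  rw [hstep, hquad]
  nlinarith [mul_le_mul_of_nonneg_left hdesc hα]

theorem dgd_objective_le_initial {M : E →ₗ[ℝ] E} (hM : M.IsSymmetric) {lam : ℝ}
    (hlam : ∀ v, lam * ‖v‖ ^ 2 ≤ ⟪v, M v⟫) (hle : ∀ v, ⟪v, M v⟫ ≤ ‖v‖ ^ 2) {F : E → ℝ}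
    {G : E → E} {K : ℝ} (hF : ∀ x d, F (x + d) ≤ F x + ⟪G x, d⟫ + K / 2 * ‖d‖ ^ 2) {α : ℝ}
    (hα : 0 < α) (hαK : α * K ≤ 1 + lam) {x : ℕ → E} (hx0 : x 0 = 0)
    (hx : ∀ k, x (k + 1) = M (x k) - α • G (x k)) (k : ℕ) : F (x k) ≤ F 0 := by
  have hV : ∀ k, dgdLyapunov M F α (x k) ≤ α * F 0 := fun k => by
    induction k with
    | zero => simp [dgdLyapunov, hx0]
    | succ k ih => exact (hx k ▸ dgdLyapunov_step_le hM hlam hF hα.le hαK (x k)).trans ih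
  have hquad : 0 ≤ ⟪x k, x k - M (x k)⟫ := by
    rw [inner_sub_right, real_inner_self_eq_norm_sq]
    linarith [hle (x k)]
  have := hV k
  unfold dgdLyapunov at this
  exact le_of_mul_le_mul_left (by linarith) hα

end Lyapunov

section Blocks

variable {n p : ℕ}

lemma kron_apply (A : Matrix (Fin n) (Fin n) ℝ) (x : CVec n p) (i : Fin n) :
    kron A x i = ∑ j, A i j • x j := rfl

def kronLin (A : Matrix (Fin n) (Fin n) ℝ) : CVec n p →ₗ[ℝ] CVec n p where
  toFun := kron A
  map_add' x y := by ext i : 1; simp [kron_apply, smul_add, sum_add_distrib]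
  map_smul' c x := by ext i : 1; simp [kron_apply, smul_sum, smul_comm c]

lemma kron_one (x : CVec n p) : kron 1 x = x := by
  ext i : 1; simp [kron_apply, Matrix.one_apply]

lemma kron_mul (A B : Matrix (Fin n) (Fin n) ℝ) (x : CVec n p) :
    kron (A * B) x = kron A (kron B x) := by
  ext i : 1
  simp only [kron_apply, Matrix.mul_apply, sum_smul, smul_sum, smul_smul]
  exact sum_comm

lemma sum_kron {A : Matrix (Fin n) (Fin n) ℝ} (hcol : ∀ j, ∑ i, A i j = 1) (x : CVec n p) :
    ∑ i, kron A x i = ∑ i, x i := by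
  simp only [kron_apply]
  rw [sum_comm]
  simp [← sum_smul, hcol]

def coordSlice (x : CVec n p) (l : Fin p) : Vec n := WithLp.toLp 2 fun i => x i l

lemma inner_eq_sum_inner_coordSlice (x y : CVec n p) :
    ⟪x, y⟫ = ∑ l, ⟪coordSlice x l, coordSlice y l⟫ := by
  simp only [PiLp.inner_apply, coordSlice]
  exact sum_comm

lemma norm_sq_eq_sum_norm_sq_coordSlice (x : CVec n p) :
    ‖x‖ ^ 2 = ∑ l, ‖coordSlice x l‖ ^ 2 := by
  simp only [← real_inner_self_eq_norm_sq, inner_eq_sum_inner_coordSlice]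

lemma coordSlice_kron (A : Matrix (Fin n) (Fin n) ℝ) (x : CVec n p) (l : Fin p) :
    coordSlice (kron A x) l = Matrix.toEuclideanLin A (coordSlice x l) := by
  ext i
  simp [coordSlice, kron_apply, Matrix.toLpLin_apply, Matrix.mulVec, dotProduct]

lemma kronLin_isSymmetric {A : Matrix (Fin n) (Fin n) ℝ} (hA : A.IsHermitian) :
    (kronLin (p := p) A).IsSymmetric := fun x y => by
  simp only [kronLin, LinearMap.coe_mk, AddHom.coe_mk, inner_eq_sum_inner_coordSlice,
    coordSlice_kron, Matrix.isSymmetric_toEuclideanLin_iff.mpr hA _]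

lemma mul_norm_sq_le_inner_kron {A : Matrix (Fin n) (Fin n) ℝ} {lam : ℝ}
    (h : ∀ v, lam * ‖v‖ ^ 2 ≤ ⟪v, Matrix.toEuclideanLin A v⟫) (x : CVec n p) :
    lam * ‖x‖ ^ 2 ≤ ⟪x, kron A x⟫ := by
  rw [norm_sq_eq_sum_norm_sq_coordSlice, inner_eq_sum_inner_coordSlice, mul_sum]
  exact sum_le_sum fun l _ => coordSlice_kron A x l ▸ h _

lemma norm_kron_le {A : Matrix (Fin n) (Fin n) ℝ} {c : ℝ} (hc : 0 ≤ c) {x : CVec n p}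
    (h : ∀ l, ‖Matrix.toEuclideanLin A (coordSlice x l)‖ ≤ c * ‖coordSlice x l‖) :
    ‖kron A x‖ ≤ c * ‖x‖ := by
  refine le_of_sq_le_sq ?_ (by positivity)
  rw [mul_pow, norm_sq_eq_sum_norm_sq_coordSlice, norm_sq_eq_sum_norm_sq_coordSlice, mul_sum]
  refine sum_le_sum fun l _ => ?_
  rw [coordSlice_kron, ← mul_pow]
  exact pow_le_pow_left₀ (norm_nonneg _) (h l) 2

lemma norm_kron_pow_le {A : Matrix (Fin n) (Fin n) ℝ} {S : Set (CVec n p)}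
    (hS : Set.MapsTo (kron A) S S) {c : ℝ} (hc : 0 ≤ c) (hA : ∀ z ∈ S, ‖kron A z‖ ≤ c * ‖z‖) :
    ∀ (t : ℕ) {z}, z ∈ S → ‖kron (A ^ t) z‖ ≤ c ^ t * ‖z‖
  | 0, z, _ => by simp [kron_one]
  | t + 1, z, hz => by
    rw [pow_succ, kron_mul, pow_succ, mul_assoc]
    exact (norm_kron_pow_le hS hc hA t (hS hz)).trans
      (mul_le_mul_of_nonneg_left (hA z hz) (pow_nonneg hc t))

end Blocks

section Mixing

variable {n p : ℕ} {A : Matrix (Fin n) (Fin n) ℝ}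

lemma sum_coordSlice_eq_zero {z : CVec n p} (hz : ∑ i, z i = 0) (l : Fin p) :
    ∑ i, coordSlice z l i = 0 := by
  simpa [coordSlice] using congr($hz l)

lemma inner_kron_pow_le_norm_sq (hA : A.IsHermitian) (heig : ∀ j, |hA.eigenvalues j| ≤ 1)
    (t : ℕ) (z : CVec n p) : ⟪z, kron (A ^ t) z⟫ ≤ ‖z‖ ^ 2 := by
  have hz : ‖kron (A ^ t) z‖ ≤ ‖z‖ := by
    simpa using norm_kron_pow_le (S := Set.univ) (Set.mapsTo_univ _ _) zero_le_one
      (fun z _ => norm_kron_le zero_le_one fun l => hA.norm_toEuclideanLin_le zero_le_one heig _)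
      t (Set.mem_univ z)
  calc _ ≤ ‖z‖ * ‖kron (A ^ t) z‖ := real_inner_le_norm _ _
    _ ≤ ‖z‖ ^ 2 := by rw [sq]; gcongr

lemma norm_kron_pow_le_of_sum_eq_zero (hA : A.IsHermitian) (hrow : ∀ i, ∑ j, A i j = 1)
    (hcol : ∀ j, ∑ i, A i j = 1) (hone : ∃! j, hA.eigenvalues j = 1) {β : ℝ} (hβ : 0 ≤ β)
    (hβA : ∀ j, hA.eigenvalues j ≠ 1 → |hA.eigenvalues j| ≤ β) (t : ℕ) {z : CVec n p}
    (hz : ∑ i, z i = 0) : ‖kron (A ^ t) z‖ ≤ β ^ t * ‖z‖ :=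
  norm_kron_pow_le (S := {z | ∑ i, z i = 0}) (fun z hz => (sum_kron hcol z).trans hz) hβ
    (fun _ hz => norm_kron_le hβ fun l =>
      hA.norm_toEuclideanLin_le_of_sum_eq_zero hrow hone hβ hβA (sum_coordSlice_eq_zero hz l))
    t hz

end Mixing

section Consensus

variable {n p : ℕ}

def consensus : CVec n p →ₗ[ℝ] CVec n p where
  toFun x := WithLp.toLp 2 fun _ => (n : ℝ)⁻¹ • ∑ j, x j
  map_add' x y := by ext i : 1; simp [sum_add_distrib]
  map_smul' c x := by ext i : 1; simp [smul_sum, smul_comm c]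

lemma consensus_apply (x : CVec n p) (i : Fin n) : consensus x i = (n : ℝ)⁻¹ • ∑ j, x j := rfl

lemma consensus_kron {A : Matrix (Fin n) (Fin n) ℝ} (hcol : ∀ j, ∑ i, A i j = 1)
    (x : CVec n p) : consensus (kron A x) = consensus x := by
  ext i : 1
  rw [consensus_apply, consensus_apply, sum_kron hcol]

lemma kron_consensus {A : Matrix (Fin n) (Fin n) ℝ} (hrow : ∀ i, ∑ j, A i j = 1)
    (x : CVec n p) : kron A (consensus x) = consensus x := by
  ext i : 1
  simp only [kron_apply, consensus_apply, ← sum_smul, hrow, one_smul]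

lemma sum_sub_consensus (x : CVec n p) : ∑ i, (x - consensus x) i = 0 := by
  rcases eq_or_ne n 0 with rfl | hn
  · simp
  · simp only [PiLp.sub_apply, consensus_apply, sum_sub_distrib, sum_const, card_univ,
      Fintype.card_fin, ← Nat.cast_smul_eq_nsmul ℝ, smul_smul,
      mul_inv_cancel₀ (Nat.cast_ne_zero.mpr hn : (n : ℝ) ≠ 0), one_smul, sub_self]

lemma norm_sub_consensus_le (x : CVec n p) : ‖x - consensus x‖ ≤ ‖x‖ := by
  have horth : ⟪x - consensus x, consensus x⟫ = 0 := by
    rw [PiLp.inner_apply]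
    simp_rw [consensus_apply]
    rw [← sum_inner, sum_sub_consensus, inner_zero_left]
  have h := norm_add_sq_eq_norm_sq_add_norm_sq_real horth
  rw [sub_add_cancel] at h
  nlinarith [norm_nonneg x, norm_nonneg (x - consensus x), sq_nonneg ‖consensus x‖]

end Consensus

lemma le_div_one_sub_of_le_mul_add {u : ℕ → ℝ} {r c : ℝ} (hr : 0 ≤ r) (hr1 : r < 1)
    (h0 : u 0 ≤ c / (1 - r)) (hu : ∀ k, u (k + 1) ≤ r * u k + c) : ∀ k, u k ≤ c / (1 - r)
  | 0 => h0
  | k + 1 => by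
    have hk := le_div_one_sub_of_le_mul_add hr hr1 h0 hu k
    have hr1' : 0 < 1 - r := sub_pos.mpr hr1
    calc u (k + 1) ≤ r * u k + c := hu k
      _ ≤ r * (c / (1 - r)) + c := by gcongr
      _ = c / (1 - r) := by field_simp; ring

section ConsensusError

variable {n p : ℕ} {A : Matrix (Fin n) (Fin n) ℝ}

lemma kron_sub (A : Matrix (Fin n) (Fin n) ℝ) (x y : CVec n p) :
    kron A (x - y) = kron A x - kron A y :=
  map_sub (kronLin A) x y

lemma sub_consensus_dgd_step (hrow : ∀ i, ∑ j, A i j = 1) (hcol : ∀ j, ∑ i, A i j = 1)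
    (α : ℝ) (x g : CVec n p) :
    kron A x - α • g - consensus (kron A x - α • g)
      = kron A (x - consensus x) - α • (g - consensus g) := by
  rw [map_sub, map_smul, consensus_kron hcol, kron_sub, kron_consensus hrow, smul_sub]
  abel

theorem norm_sub_consensus_dgd_le (hrow : ∀ i, ∑ j, A i j = 1) (hcol : ∀ j, ∑ i, A i j = 1)
    {r : ℝ} (hr : 0 ≤ r) (hr1 : r < 1)
    (hA : ∀ z : CVec n p, ∑ i, z i = 0 → ‖kron A z‖ ≤ r * ‖z‖)
    {α c : ℝ} (hα : 0 ≤ α) (G : CVec n p → CVec n p) (x : ℕ → CVec n p) (hx0 : x 0 = 0)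
    (hx : ∀ k, x (k + 1) = kron A (x k) - α • G (x k)) (hG : ∀ k, ‖G (x k)‖ ≤ c) (k : ℕ) :
    ‖x k - consensus (x k)‖ ≤ α * c / (1 - r) := by
  have hc : 0 ≤ c := (norm_nonneg _).trans (hG 0)
  refine le_div_one_sub_of_le_mul_add (u := fun k => ‖x k - consensus (x k)‖) hr hr1 ?_
    (fun k => ?_) k
  · simp only [hx0, map_zero, sub_zero, norm_zero]
    exact div_nonneg (mul_nonneg hα hc) (sub_nonneg.mpr hr1.le)
  · rw [hx k, sub_consensus_dgd_step hrow hcol]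
    calc _ ≤ ‖kron A (x k - consensus (x k))‖ + ‖α • (G (x k) - consensus (G (x k)))‖ :=
          norm_sub_le _ _
      _ ≤ r * ‖x k - consensus (x k)‖ + α * c := by
        rw [norm_smul, Real.norm_of_nonneg hα]
        gcongr
        · exact hA _ (sum_sub_consensus _)
        · exact (norm_sub_consensus_le _).trans (hG k)

end ConsensusError

section LocalObjectives

variable {n p : ℕ} {f : Fin n → Vec p → ℝ} {K : Fin n → ℝ≥0} {L : ℝ}

lemma sum_le_add_inner_gradConcat_add (hdiff : ∀ i, Differentiable ℝ (f i))
    (hLip : ∀ i, LipschitzWith (K i) (gradient (f i))) (hK : ∀ i, (K i : ℝ) ≤ L)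
    (x d : CVec n p) :
    ∑ i, f i ((x + d) i) ≤ ∑ i, f i (x i) + ⟪gradConcat f x, d⟫ + L / 2 * ‖d‖ ^ 2 := by
  rw [PiLp.inner_apply, PiLp.norm_sq_eq_of_L2, mul_sum, ← sum_add_distrib, ← sum_add_distrib]
  refine sum_le_sum fun i _ => ?_
  have hLi : (K i : ℝ) / 2 * ‖d i‖ ^ 2 ≤ L / 2 * ‖d i‖ ^ 2 := by gcongr; exact hK i
  exact (le_add_inner_gradient_add_of_lipschitzWith (hdiff i) (hLip i) (x i) (d i)).trans
    (by simpa [gradConcat] using hLi)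

lemma norm_gradConcat_le (hdiff : ∀ i, Differentiable ℝ (f i))
    (hLip : ∀ i, LipschitzWith (K i) (gradient (f i))) (hK : ∀ i, (K i : ℝ) ≤ L) (hL : 0 < L)
    {xs : Fin n → Vec p} (hxs : ∀ i z, f i (xs i) ≤ f i z) {y : CVec n p}
    (hy : ∑ i, f i (y i) ≤ ∑ i, f i 0) :
    ‖gradConcat f y‖ ≤ √(2 * L * ∑ i, (f i 0 - f i (xs i))) := by
  have hLip' (i : Fin n) : LipschitzWith L.toNNReal (gradient (f i)) :=
    (hLip i).weaken (by rw [← NNReal.coe_le_coe, Real.coe_toNNReal _ hL.le]; exact hK i)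
  refine Real.le_sqrt_of_sq_le ?_
  calc ‖gradConcat f y‖ ^ 2 = ∑ i, ‖gradient (f i) (y i)‖ ^ 2 := PiLp.norm_sq_eq_of_L2 _ _
    _ ≤ ∑ i, 2 * L * (f i (y i) - f i (xs i)) := sum_le_sum fun i _ => by
        simpa [Real.coe_toNNReal _ hL.le] using sq_norm_gradient_le_of_forall_le (hdiff i)
          (hLip' i) (Real.toNNReal_pos.mpr hL) (hxs i) (y i)
    _ ≤ 2 * L * ∑ i, (f i 0 - f i (xs i)) := by
        rw [← mul_sum, sum_sub_distrib, sum_sub_distrib]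
        gcongr

end LocalObjectives

lemma norm_inv_smul_sum_le {E : Type*} [SeminormedAddCommGroup E] [NormedSpace ℝ E] {n : ℕ}
    (hn : n ≠ 0) {v : Fin n → E} {c : ℝ} (hv : ∀ i, ‖v i‖ ≤ c) : ‖(n : ℝ)⁻¹ • ∑ i, v i‖ ≤ c := by
  have hn' : (0 : ℝ) < n := by positivity
  rw [norm_smul, norm_inv, Real.norm_natCast, inv_mul_le_iff₀ hn']
  calc ‖∑ i, v i‖ ≤ ∑ i, ‖v i‖ := norm_sum_le _ _
    _ ≤ ∑ _ : Fin n, c := sum_le_sum fun i _ => hv i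
    _ = n * c := by simp

theorem dgdt_bounded_gradient_deviation_general
    (n p t : ℕ) (hn : 1 ≤ n) (ht : 1 ≤ t)
    -- local objective functions: convex, differentiable, with Lᵢ-Lipschitz gradients
    (f : Fin n → Vec p → ℝ) (Lc : Fin n → ℝ) (L : ℝ)
    (hdiff : ∀ i, Differentiable ℝ (f i))
    (hLpos : ∀ i, 0 < Lc i)
    (hLip : ∀ i, LipschitzWith (Real.toNNReal (Lc i)) (fun z => gradient (f i) z))
    (hLmax : IsGreatest (Set.range Lc) L)
    -- each fᵢ attains its minimum at xsᵢ
    (xs : Fin n → Vec p) (hxs : ∀ i, ∀ z, f i (xs i) ≤ f i z)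
    -- W is symmetric, doubly stochastic, with eigenvalues in (−1, 1],
    -- exactly one eigenvalue equal to 1
    (W : Matrix (Fin n) (Fin n) ℝ) (hWsymm : W.IsHermitian)
    (hrow : ∀ i, ∑ j, W i j = 1) (hcol : ∀ j, ∑ i, W i j = 1)
    (hWnn : ∀ i j, 0 ≤ W i j)
    (heig : ∀ i, hWsymm.eigenvalues i ∈ Set.Ioc (-1 : ℝ) 1)
    (hone : ∃! i, hWsymm.eigenvalues i = 1)
    -- β ∈ (0,1): the second largest magnitude of the eigenvalues of W
    (β : ℝ) (hβmem : β ∈ Set.Ioo (0 : ℝ) 1)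
    (hβ : IsGreatest {r : ℝ | ∃ i, hWsymm.eigenvalues i ≠ 1 ∧ r = |hWsymm.eigenvalues i|} β)
    -- λₙ(Wᵗ): the smallest eigenvalue of Wᵗ
    (hWt : (W ^ t).IsHermitian)
    (lam : ℝ) (hlam : IsLeast (Set.range hWt.eigenvalues) lam)
    -- stepsize condition α ≤ (1 + λₙ(Wᵗ))/L
    (α : ℝ) (hα : 0 < α) (hαle : α ≤ (1 + lam) / L)
    -- DGDᵗ iterates starting from x₀ = 0
    (x : ℕ → CVec n p) (hx0 : x 0 = 0)
    (hiter : ∀ k, x (k + 1) = kron (W ^ t) (x k) - α • gradConcat f (x k))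
    -- the gradient bound D
    (D : ℝ) (hD : D = Real.sqrt (2 * L * ∑ i, (f i 0 - f i (xs i))))
    -- the mean iterate, the averaged gradients g and ḡ
    (xbar : ℕ → Vec p) (hxbar : ∀ k, xbar k = (n : ℝ)⁻¹ • ∑ i, x k i)
    (g gbar : ℕ → Vec p)
    (hg : ∀ k, g k = (n : ℝ)⁻¹ • ∑ i, gradient (f i) (x k i))
    (hgbar : ∀ k, gbar k = (n : ℝ)⁻¹ • ∑ i, gradient (f i) (xbar k)) :
    ∀ k, 1 ≤ k →
      (∀ i, ‖gradient (f i) (x k i) - gradient (f i) (xbar k)‖ ≤ α * D * Lc i / (1 - β ^ t)) ∧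
      ‖g k - gbar k‖ ≤ α * D * L / (1 - β ^ t) := by
  obtain ⟨⟨iL, hiL⟩, hLmax⟩ := hLmax
  have hL : 0 < L := hiL ▸ hLpos iL
  have hK (i : Fin n) : ((Lc i).toNNReal : ℝ) ≤ L := by
    rw [Real.coe_toNNReal _ (hLpos i).le]; exact hLmax ⟨i, rfl⟩
  have hβt : β ^ t < 1 := pow_lt_one₀ hβmem.1.le hβmem.2 (by omega)
  have hobj (k : ℕ) : ∑ i, f i (x k i) ≤ ∑ i, f i 0 := by
    simpa using dgd_objective_le_initial (F := fun y => ∑ i, f i (y i)) (kronLin_isSymmetric hWt)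
      (mul_norm_sq_le_inner_kron (hWt.mul_norm_sq_le_inner_toEuclideanLin (hlam.2 ⟨·, rfl⟩)))
      (inner_kron_pow_le_norm_sq hWsymm (fun j => abs_le.mpr ⟨(heig j).1.le, (heig j).2⟩) t)
      (sum_le_add_inner_gradConcat_add hdiff hLip hK) hα ((le_div_iff₀ hL).mp hαle) hx0 hiter k
  have hWt_ds : W ^ t ∈ doublyStochastic ℝ (Fin n) :=
    pow_mem (mem_doublyStochastic_iff_sum.mpr ⟨hWnn, hrow, hcol⟩) t
  have hdev (k : ℕ) (i : Fin n) : ‖x k i - xbar k‖ ≤ α * D / (1 - β ^ t) := by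
    rw [hxbar k]
    refine (PiLp.norm_apply_le _ i).trans <| norm_sub_consensus_dgd_le
      (sum_row_of_mem_doublyStochastic hWt_ds) (sum_col_of_mem_doublyStochastic hWt_ds)
      (pow_nonneg hβmem.1.le t) hβt (fun _ => norm_kron_pow_le_of_sum_eq_zero hWsymm hrow hcol hone
        hβmem.1.le (fun j hj => hβ.2 ⟨j, hj, rfl⟩) t) hα.le _ x hx0 hiter (fun k => ?_) k
    exact hD ▸ norm_gradConcat_le hdiff hLip hK hL hxs (hobj k)
  intro k _
  have hblock (i : Fin n) :
      ‖gradient (f i) (x k i) - gradient (f i) (xbar k)‖ ≤ α * D * Lc i / (1 - β ^ t) := by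
    have hlip := (hLip i).dist_le_mul (x k i) (xbar k)
    rw [dist_eq_norm, dist_eq_norm, Real.coe_toNNReal _ (hLpos i).le] at hlip
    calc _ ≤ Lc i * (α * D / (1 - β ^ t)) := hlip.trans (by gcongr; exacts [(hLpos i).le, hdev k i])
      _ = _ := by ring
  refine ⟨hblock, ?_⟩
  rw [hg, hgbar, ← smul_sub, ← sum_sub_distrib]
  refine norm_inv_smul_sum_le (by omega) fun i => (hblock i).trans ?_
  have hαD : 0 ≤ α * D := mul_nonneg hα.le (hD ▸ Real.sqrt_nonneg _)
  have hβt' : 0 < 1 - β ^ t := sub_pos.mpr hβt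
  gcongr
  exact hLmax ⟨i, rfl⟩

/-- if `α ≤ (1 + λₙ(Wᵗ))/L` and `x₀ = 0`, then for all `k ≥ 1` and all `i`
the DGDᵗ iterates satisfy `‖∇fᵢ(x_{i,k}) − ∇fᵢ(x̄_k)‖ ≤ αDLᵢ/(1 − βᵗ)` and
`‖g_k − ḡ_k‖ ≤ αDL/(1 − βᵗ)`. -/
theorem dgdt_bounded_gradient_deviation
    (n p t : ℕ) (hn : 1 ≤ n) (hp : 1 ≤ p) (ht : 1 ≤ t)
    -- local objective functions: convex, differentiable, with Lᵢ-Lipschitz gradients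
    (f : Fin n → Vec p → ℝ) (Lc : Fin n → ℝ) (L : ℝ)
    (hconv : ∀ i, ConvexOn ℝ Set.univ (f i))
    (hdiff : ∀ i, Differentiable ℝ (f i))
    (hLpos : ∀ i, 0 < Lc i)
    (hLip : ∀ i, LipschitzWith (Real.toNNReal (Lc i)) (fun z => gradient (f i) z))
    (hLmax : IsGreatest (Set.range Lc) L)
    -- each fᵢ attains its minimum at xsᵢ
    (xs : Fin n → Vec p) (hxs : ∀ i, ∀ z, f i (xs i) ≤ f i z)
    -- W is symmetric, doubly stochastic, with eigenvalues in (−1, 1],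
    -- exactly one eigenvalue equal to 1
    (W : Matrix (Fin n) (Fin n) ℝ) (hWsymm : W.IsHermitian)
    (hrow : ∀ i, ∑ j, W i j = 1) (hcol : ∀ j, ∑ i, W i j = 1)
    (hWnn : ∀ i j, 0 ≤ W i j)
    (heig : ∀ i, hWsymm.eigenvalues i ∈ Set.Ioc (-1 : ℝ) 1)
    (hone : ∃! i, hWsymm.eigenvalues i = 1)
    -- β ∈ (0,1): the second largest magnitude of the eigenvalues of W
    (β : ℝ) (hβmem : β ∈ Set.Ioo (0 : ℝ) 1)
    (hβ : IsGreatest {r : ℝ | ∃ i, hWsymm.eigenvalues i ≠ 1 ∧ r = |hWsymm.eigenvalues i|} β)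
    -- λₙ(Wᵗ): the smallest eigenvalue of Wᵗ
    (hWt : (W ^ t).IsHermitian)
    (lam : ℝ) (hlam : IsLeast (Set.range hWt.eigenvalues) lam)
    -- stepsize condition α ≤ (1 + λₙ(Wᵗ))/L
    (α : ℝ) (hα : 0 < α) (hαle : α ≤ (1 + lam) / L)
    -- DGDᵗ iterates starting from x₀ = 0
    (x : ℕ → CVec n p) (hx0 : x 0 = 0)
    (hiter : ∀ k, x (k + 1) = kron (W ^ t) (x k) - α • gradConcat f (x k))
    -- the gradient bound D
    (D : ℝ) (hD : D = Real.sqrt (2 * L * ∑ i, (f i 0 - f i (xs i))))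
    -- the mean iterate, the averaged gradients g and ḡ
    (xbar : ℕ → Vec p) (hxbar : ∀ k, xbar k = (n : ℝ)⁻¹ • ∑ i, x k i)
    (g gbar : ℕ → Vec p)
    (hg : ∀ k, g k = (n : ℝ)⁻¹ • ∑ i, gradient (f i) (x k i))
    (hgbar : ∀ k, gbar k = (n : ℝ)⁻¹ • ∑ i, gradient (f i) (xbar k)) :
    ∀ k, 1 ≤ k →
      (∀ i, ‖gradient (f i) (x k i) - gradient (f i) (xbar k)‖ ≤ α * D * Lc i / (1 - β ^ t)) ∧
      ‖g k - gbar k‖ ≤ α * D * L / (1 - β ^ t) :=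
  dgdt_bounded_gradient_deviation_general n p t hn ht f Lc L hdiff hLpos hLip hLmax xs hxs W hWsymm
    hrow hcol hWnn heig hone β hβmem hβ hWt lam hlam α hα hαle x hx0 hiter D hD xbar hxbar g gbar hg
    hgbar
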